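/- arXiv:2401.11622 — 7 statements merged into one kernel-verified Lean document; each statement's English description precedes it below -/
import Mathlib

section
/- Given an m-state Markov chain S = (S_0,…,S_{m−1}) with transition probabilities q_j(S_k) and costs ℓ(S_k), and given that the transition matrix has a unique stationary distribution, the m hyperplanes y = f_k(x, S_k) in ℝ^m intersect at a unique point (x^int, y^int), where f_0(x,S_0) = ℓ(S_0) + Σ_{j=1}^{m−1} q_j(S_0)·x_j and, for k ≥ 1, f_k(x,S_k) = ℓ(S_k) + Σ_{j=1}^{m−1} q_j(S_k)·x_j − x_k. -/
/-- For a Markov chain with states `S_k` having transition probabilities `q k j`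
and costs `ℓ k`, whose transition matrix has a unique stationary distribution
(one-dimensional kernel of `Q - I`), the `m` hyperplanes `y = f_k(x, S_k)`
intersect at a unique point.  Here `x : Fin m → ℝ` with `x 0 = 0` encodes a
point of `ℝ^{m-1}`, and `f_k(x,S_k) = ℓ k + ∑ j, q k j * x j - x k` (for `k = 0`
the term `x 0 = 0` vanishes, matching `f_0`). -/
theorem stmt4 (m : ℕ) (hm : 0 < m) (q : Fin m → Fin m → ℝ) (ℓ : Fin m → ℝ)
    (hqnn : ∀ k j, 0 ≤ q k j) (hqsum : ∀ k, ∑ j, q k j = 1)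
    (hker : ∀ v : Fin m → ℝ,
      Matrix.mulVec ((Matrix.of q) - 1) v = 0 → ∃ c : ℝ, v = fun _ => c) :
    ∃! p : (Fin m → ℝ) × ℝ, p.1 ⟨0, hm⟩ = 0 ∧
      ∀ k, ℓ k + (∑ j, q k j * p.1 j) - p.1 k = p.2 := by
  haveI : Nonempty (Fin m) := ⟨⟨0, hm⟩⟩
  -- define the linear map L (x, y) = (fun k => x k - ∑ j, q k j * x j + y, x 0)
  set L : ((Fin m → ℝ) × ℝ) →ₗ[ℝ] ((Fin m → ℝ) × ℝ) :=
    { toFun := fun p => (fun k => p.1 k - (∑ j, q k j * p.1 j) + p.2, p.1 ⟨0, hm⟩)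
      map_add' := by
        intro a b
        ext k
        · simp [Finset.sum_add_distrib, mul_add]
          ring
        · simp
      map_smul' := by
        intro c a
        ext k
        · have : ∑ j, q k j * (c * a.1 j) = c * ∑ j, q k j * a.1 j := by
            rw [Finset.mul_sum]; exact Finset.sum_congr rfl fun j _ => by ring
          simp only [Prod.smul_fst, Pi.smul_apply, Prod.smul_snd, smul_eq_mul, RingHom.id_apply]
          rw [this]; ring
        · simp } with hL
  have hinj : Function.Injective L := by
    rw [injective_iff_map_eq_zero]
    intro p hp
    have h1 : ∀ k, p.1 k - (∑ j, q k j * p.1 j) + p.2 = 0 := fun k =>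
      congrFun (congrArg Prod.fst hp) k
    have h0 : p.1 ⟨0, hm⟩ = 0 := congrArg Prod.snd hp
    -- first show p.2 = 0 via max/min principle
    obtain ⟨kmax, hkmax⟩ := Finite.exists_max p.1
    obtain ⟨kmin, hkmin⟩ := Finite.exists_min p.1
    have hle : p.2 ≤ 0 := by
      have hsum : ∑ j, q kmax j * p.1 j ≤ ∑ j, q kmax j * p.1 kmax :=
        Finset.sum_le_sum fun j _ => mul_le_mul_of_nonneg_left (hkmax j) (hqnn kmax j)
      have : ∑ j, q kmax j * p.1 kmax = p.1 kmax := by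
        rw [← Finset.sum_mul, hqsum, one_mul]
      have h := h1 kmax
      linarith
    have hge : 0 ≤ p.2 := by
      have hsum : ∑ j, q kmin j * p.1 kmin ≤ ∑ j, q kmin j * p.1 j :=
        Finset.sum_le_sum fun j _ => mul_le_mul_of_nonneg_left (hkmin j) (hqnn kmin j)
      have : ∑ j, q kmin j * p.1 kmin = p.1 kmin := by
        rw [← Finset.sum_mul, hqsum, one_mul]
      have h := h1 kmin
      linarith
    have hy : p.2 = 0 := le_antisymm hle hge
    -- now p.1 is in the kernel of Q - I
    have hk : Matrix.mulVec ((Matrix.of q) - 1) p.1 = 0 := by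
      funext k
      have h := h1 k
      rw [hy] at h
      rw [Matrix.sub_mulVec, Matrix.one_mulVec]
      simp only [Pi.sub_apply, Pi.zero_apply, Matrix.mulVec, dotProduct,
        Matrix.of_apply]
      linarith [h]
    obtain ⟨c, hc⟩ := hker p.1 hk
    have hc0 : c = 0 := by
      have := congrFun hc ⟨0, hm⟩
      rw [h0] at this
      exact this.symm
    have : p.1 = 0 := by rw [hc, hc0]; rfl
    exact Prod.ext this hy
  have hsurj : Function.Surjective L :=
    LinearMap.injective_iff_surjective.mp hinj
  obtain ⟨p, hp⟩ := hsurj (ℓ, 0)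
  have key : ∀ a : (Fin m → ℝ) × ℝ,
      (a.1 ⟨0, hm⟩ = 0 ∧ ∀ k, ℓ k + (∑ j, q k j * a.1 j) - a.1 k = a.2) ↔ L a = (ℓ, 0) := by
    intro a
    constructor
    · rintro ⟨h0, h1⟩
      have : (fun k => a.1 k - (∑ j, q k j * a.1 j) + a.2) = ℓ := by
        funext k; have := h1 k; linarith
      exact Prod.ext this h0
    · intro h
      have h1 : ∀ k, a.1 k - (∑ j, q k j * a.1 j) + a.2 = ℓ k := fun k =>
        congrFun (congrArg Prod.fst h) k
      have h0 : a.1 ⟨0, hm⟩ = 0 := congrArg Prod.snd h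
      exact ⟨h0, fun k => by have := h1 k; linarith⟩
  refine ⟨p, (key p).mpr hp, fun a ha => ?_⟩
  exact hinj (((key a).mp ha).trans hp.symm)
end

section
/- Let (x^int, y^int) be the unique common intersection point of the m hyperplanes y = f_k(x, S_k) associated with a Markov chain S with stationary distribution π. Then for every x ∈ ℝ^{m−1}, y^int = Σ_{k=0}^{m−1} f_k(x, S_k)·π_k = cost(S), where cost(S) = Σ_k ℓ(S_k)·π_k. -/
/-!
Stationarity of `π` makes the correction terms `∑ j, q k j * x j - x k` average to zero under `π`,
so the `π`-average of `f_k(x, S_k)` is the cost for every `x`. At `x = xint` every `f_k` equals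
`yint`, and `π` sums to one, so that average is also `yint`.
-/

open Finset Matrix

section Stationary

variable {n R : Type*} [Fintype n]

theorem sum_mulVec_mul_of_vecMul_eq_self [CommSemiring R] {Q : Matrix n n R} {π : n → R}
    (hπ : π ᵥ* Q = π) (x : n → R) :
    ∑ k, (∑ j, Q k j * x j) * π k = ∑ k, x k * π k := by
  have h := dotProduct_mulVec π Q x
  rw [hπ] at h
  simpa only [dotProduct, mulVec, mul_comm (π _)] using h

theorem sum_add_mulVec_sub_mul_of_vecMul_eq_self [CommRing R] {Q : Matrix n n R} {π : n → R}
    (hπ : π ᵥ* Q = π) (ℓ x : n → R) :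
    ∑ k, (ℓ k + ∑ j, Q k j * x j - x k) * π k = ∑ k, ℓ k * π k := by
  simp only [sub_mul, add_mul, sum_sub_distrib, sum_add_distrib,
    sum_mulVec_mul_of_vecMul_eq_self hπ, add_sub_cancel_right]

end Stationary

theorem stmt5_general (m : ℕ) (hm : 0 < m) (q : Fin m → Fin m → ℝ) (ℓ : Fin m → ℝ)
    (pii : Fin m → ℝ) (hpsum : ∑ k, pii k = 1)
    (hstat : Matrix.vecMul pii (Matrix.of q) = pii)
    (xint : Fin m → ℝ) (yint : ℝ)
    (hint : ∀ k, ℓ k + (∑ j, q k j * xint j) - xint k = yint) :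
    ∀ x : Fin m → ℝ, x ⟨0, hm⟩ = 0 →
      yint = ∑ k, (ℓ k + (∑ j, q k j * x j) - x k) * pii k ∧
      yint = ∑ k, ℓ k * pii k := by
  have hcost (x : Fin m → ℝ) := sum_add_mulVec_sub_mul_of_vecMul_eq_self hstat ℓ x
  have hy : yint = ∑ k, ℓ k * pii k := by
    rw [← hcost xint]
    simp only [of_apply, hint, ← mul_sum, hpsum, mul_one]
  exact fun x _ => ⟨hy.trans (hcost x).symm, hy⟩

/-- If `(xint, yint)` is the common intersection point of the `m` hyperplanes
`y = f_k(x,S_k)` of a Markov chain with stationary distribution `pii`, then for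
every `x` (with `x 0 = 0`), `yint = ∑ k, f_k(x,S_k) * pii k = cost(S)` where
`cost(S) = ∑ k, ℓ k * pii k`. -/
theorem stmt5 (m : ℕ) (hm : 0 < m) (q : Fin m → Fin m → ℝ) (ℓ : Fin m → ℝ)
    (hqnn : ∀ k j, 0 ≤ q k j) (hqsum : ∀ k, ∑ j, q k j = 1)
    (pii : Fin m → ℝ) (hpnn : ∀ k, 0 ≤ pii k) (hpsum : ∑ k, pii k = 1)
    (hstat : Matrix.vecMul pii (Matrix.of q) = pii)
    (xint : Fin m → ℝ) (yint : ℝ) (hx0 : xint ⟨0, hm⟩ = 0)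
    (hint : ∀ k, ℓ k + (∑ j, q k j * xint j) - xint k = yint) :
    ∀ x : Fin m → ℝ, x ⟨0, hm⟩ = 0 →
      yint = ∑ k, (ℓ k + (∑ j, q k j * x j) - x k) * pii k ∧
      yint = ∑ k, ℓ k * pii k :=
  stmt5_general m hm q ℓ pii hpsum hstat xint yint hint
end

section
/- F(z) = z if and only if g_0(z) = g_1(z) = ⋯ = g_{m−1}(z), where g_k(z) = min_{S_k∈𝕊_k} f_k(z, S_k) and F is the map that takes z to the projection onto ℝ^{m−1} of the unique common intersection point of the hyperplanes f_k(·, S_k(z)) with S_k(z) a minimizer of f_k(z, ·) over 𝕊_k. -/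
/-- A state is a pair `(ℓ, q)`; `fval m k x T` is its type-`k` hyperplane at `x`. -/
noncomputable def fval (m : ℕ) (k : Fin m) (x : Fin m → ℝ) (T : ℝ × (Fin m → ℝ)) : ℝ :=
  T.1 + (∑ j, T.2 j * x j) - x k

/-- `F(z) = z` iff `g_0(z) = ⋯ = g_{m-1}(z)`.  Here `Sk k` is a minimizer of
`f_k(z, ·)` over `𝕊 k` (so `g_k(z) = fval m k z (Sk k)`), and `(x', y')` is the
unique common intersection point of the hyperplanes `f_k(·, Sk k)`; `F(z) = x'`,
so `F(z) = z` is expressed as `x' = z`. -/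
theorem stmt8 (m : ℕ) (hm : 0 < m)
    (𝕊 : Fin m → Finset (ℝ × (Fin m → ℝ)))
    (z : Fin m → ℝ) (hz0 : z ⟨0, hm⟩ = 0)
    (Sk : Fin m → ℝ × (Fin m → ℝ)) (hSk : ∀ k, Sk k ∈ 𝕊 k)
    (hmin : ∀ k, ∀ T ∈ 𝕊 k, fval m k z (Sk k) ≤ fval m k z T)
    (x' : Fin m → ℝ) (y' : ℝ) (hx'0 : x' ⟨0, hm⟩ = 0)
    (hint : ∀ k, fval m k x' (Sk k) = y')
    (huniq : ∀ (x'' : Fin m → ℝ) (y'' : ℝ), x'' ⟨0, hm⟩ = 0 →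
      (∀ k, fval m k x'' (Sk k) = y'') → x'' = x' ∧ y'' = y') :
    x' = z ↔ ∀ k k' : Fin m, fval m k z (Sk k) = fval m k' z (Sk k') := by
  constructor
  · intro h k k'
    rw [← h, hint k, hint k']
  · intro h
    have := huniq z (fval m ⟨0, hm⟩ z (Sk ⟨0, hm⟩)) hz0 (fun k => h k ⟨0, hm⟩)
    exact this.1.symm
end

section
/- If F(x*) = x*, then cost(S(x*)) = h(x*) and, moreover, min_{S∈𝕊} cost(S) = cost(S(x*)) = h(x*) = max_{x∈ℝ^{m−1}} h(x). -/
/-- If `F(x*) = x*` (i.e. the hyperplanes of the componentwise minimizers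
`Sk k` at `x*` all pass through the common point `(x*, y*)`), then
`cost(S(x*)) = y* = h(x*)`, `y*` equals the minimum cost over all permissible
chains, and `h` attains its maximum `y*` at `x*`. -/
theorem stmt9 (m : ℕ) (hm : 0 < m)
    (𝕊 : Fin m → Finset (ℝ × (Fin m → ℝ)))
    (hne : ∀ k, (𝕊 k).Nonempty)
    (hnn : ∀ k, ∀ T ∈ 𝕊 k, ∀ j, 0 ≤ T.2 j)
    (hsum : ∀ k, ∀ T ∈ 𝕊 k, ∑ j, T.2 j = 1)
    (hq0 : ∀ k, ∀ T ∈ 𝕊 k, 0 < T.2 ⟨0, hm⟩)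
    (pii : (Fin m → ℝ × (Fin m → ℝ)) → Fin m → ℝ)
    (hpii : ∀ S : Fin m → ℝ × (Fin m → ℝ), (∀ k, S k ∈ 𝕊 k) →
      (∀ k, 0 ≤ pii S k) ∧ (∑ k, pii S k = 1) ∧
      (∀ j, ∑ k, pii S k * (S k).2 j = pii S j))
    (xstar : Fin m → ℝ) (hx0 : xstar ⟨0, hm⟩ = 0)
    (Sk : Fin m → ℝ × (Fin m → ℝ)) (hSk : ∀ k, Sk k ∈ 𝕊 k)
    (hmin : ∀ k, ∀ T ∈ 𝕊 k, fval m k xstar (Sk k) ≤ fval m k xstar T)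
    (ystar : ℝ) (hfix : ∀ k, fval m k xstar (Sk k) = ystar) :
    (∑ k, (Sk k).1 * pii Sk k = ystar) ∧
    (∀ S : Fin m → ℝ × (Fin m → ℝ), (∀ k, S k ∈ 𝕊 k) →
      ystar ≤ ∑ k, (S k).1 * pii S k) ∧
    (∀ x : Fin m → ℝ, x ⟨0, hm⟩ = 0 →
      Finset.univ.inf' (Finset.univ_nonempty_iff.mpr ⟨⟨0, hm⟩⟩)
        (fun k => (𝕊 k).inf' (hne k) (fval m k x)) ≤ ystar) ∧
    Finset.univ.inf' (Finset.univ_nonempty_iff.mpr ⟨⟨0, hm⟩⟩)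
      (fun k => (𝕊 k).inf' (hne k) (fval m k xstar)) = ystar := by
  have hv : ∀ k, (Sk k).1 = ystar + xstar k - ∑ j, (Sk k).2 j * xstar j := by
    intro k
    have := hfix k
    unfold fval at this
    linarith
  -- key sum computation
  have calc1 : ∀ (S : Fin m → ℝ × (Fin m → ℝ)), (∀ k, S k ∈ 𝕊 k) →
      ∑ k, (ystar + xstar k - ∑ j, (S k).2 j * xstar j) * pii S k = ystar := by
    intro S hS
    obtain ⟨hp0, hp1, hp2⟩ := hpii S hS
    have h1 : ∑ k, (ystar + xstar k - ∑ j, (S k).2 j * xstar j) * pii S k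
        = ystar * ∑ k, pii S k + ∑ k, xstar k * pii S k
          - ∑ k, (∑ j, (S k).2 j * xstar j) * pii S k := by
      rw [Finset.mul_sum, ← Finset.sum_add_distrib, ← Finset.sum_sub_distrib]
      exact Finset.sum_congr rfl fun k _ => by ring
    have h2 : ∑ k, (∑ j, (S k).2 j * xstar j) * pii S k = ∑ j, xstar j * pii S j := by
      simp_rw [Finset.sum_mul]
      rw [Finset.sum_comm]
      refine Finset.sum_congr rfl fun j _ => ?_
      rw [← hp2 j, Finset.mul_sum]
      exact Finset.sum_congr rfl fun k _ => by ring
    rw [h1, h2, hp1]; ring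
  have part1 : ∑ k, (Sk k).1 * pii Sk k = ystar := by
    rw [← calc1 Sk hSk]
    exact Finset.sum_congr rfl fun k _ => by rw [hv k]
  have part2 : ∀ S : Fin m → ℝ × (Fin m → ℝ), (∀ k, S k ∈ 𝕊 k) →
      ystar ≤ ∑ k, (S k).1 * pii S k := by
    intro S hS
    obtain ⟨hp0, hp1, hp2⟩ := hpii S hS
    rw [← calc1 S hS]
    refine Finset.sum_le_sum fun k _ => ?_
    refine mul_le_mul_of_nonneg_right ?_ (hp0 k)
    have h1 := hmin k (S k) (hS k)
    rw [hfix k] at h1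
    unfold fval at h1
    linarith
  have part3 : ∀ x : Fin m → ℝ, x ⟨0, hm⟩ = 0 →
      Finset.univ.inf' (Finset.univ_nonempty_iff.mpr ⟨⟨0, hm⟩⟩)
        (fun k => (𝕊 k).inf' (hne k) (fval m k x)) ≤ ystar := by
    intro x _
    obtain ⟨k0, -, hk0⟩ := Finset.exists_max_image Finset.univ
      (fun k => x k - xstar k) ⟨⟨0, hm⟩, Finset.mem_univ _⟩
    have hle1 : Finset.univ.inf' (Finset.univ_nonempty_iff.mpr ⟨⟨0, hm⟩⟩)
        (fun k => (𝕊 k).inf' (hne k) (fval m k x)) ≤ fval m k0 x (Sk k0) :=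
      le_trans (Finset.inf'_le _ (Finset.mem_univ k0)) (Finset.inf'_le _ (hSk k0))
    refine hle1.trans ?_
    have hq := hsum k0 (Sk k0) (hSk k0)
    have hs1 : ∑ j, (Sk k0).2 j * (x j - xstar j)
        ≤ ∑ j, (Sk k0).2 j * (x k0 - xstar k0) :=
      Finset.sum_le_sum fun j _ =>
        mul_le_mul_of_nonneg_left (hk0 j (Finset.mem_univ j)) (hnn k0 (Sk k0) (hSk k0) j)
    have hs2 : ∑ j, (Sk k0).2 j * (x k0 - xstar k0) = x k0 - xstar k0 := by
      rw [← Finset.sum_mul, hq, one_mul]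
    have hs3 : ∑ j, (Sk k0).2 j * (x j - xstar j)
        = ∑ j, (Sk k0).2 j * x j - ∑ j, (Sk k0).2 j * xstar j := by
      rw [← Finset.sum_sub_distrib]
      exact Finset.sum_congr rfl fun j _ => by ring
    have hf := hfix k0
    unfold fval
    unfold fval at hf
    rw [hs3, hs2] at hs1
    linarith
  refine ⟨part1, part2, part3, le_antisymm (part3 xstar hx0) ?_⟩
  refine Finset.le_inf' _ _ fun k _ => ?_
  refine Finset.le_inf' _ _ fun T hT => ?_
  rw [← hfix k]
  exact hmin k T hT
end

section
/- Let (x̂, ŷ) be a highest point of the Markov chain polytope (ŷ = h(x̂) = max_x h(x)), and let P ⊆ [m] with 0 ∈ P. If g_{k|P}(x̂) = ŷ for all k ∈ P, then the Markov chain S_{|P}(x̂) formed by picking, for each k, a minimizer of f_k(x̂,·) over states restricted to transition only within P, has cost(S_{|P}(x̂)) = ŷ, and is thus a minimum-cost Markov chain. -/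
/-- Pruning lemma, part (a).  Let `(xhat, yhat)` be a highest point of the
Markov chain polytope (`yhat = h(xhat) = max_x h(x)`), let `P ∋ 0` and let
`SkP k` be a minimizer of `f_k(xhat, ·)` over states restricted to transition
only within `P`.  If `g_{k|P}(xhat) = yhat` for all `k ∈ P`, then the chain
`S_{|P}(xhat) = SkP` has cost `yhat` and is a minimum-cost chain. -/
theorem stmt10 (m : ℕ) (hm : 0 < m)
    (𝕊 : Fin m → Finset (ℝ × (Fin m → ℝ)))
    (hne : ∀ k, (𝕊 k).Nonempty)
    (hnn : ∀ k, ∀ T ∈ 𝕊 k, ∀ j, 0 ≤ T.2 j)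
    (hsum : ∀ k, ∀ T ∈ 𝕊 k, ∑ j, T.2 j = 1)
    (hq0 : ∀ k, ∀ T ∈ 𝕊 k, 0 < T.2 ⟨0, hm⟩)
    (pii : (Fin m → ℝ × (Fin m → ℝ)) → Fin m → ℝ)
    (hpii : ∀ S : Fin m → ℝ × (Fin m → ℝ), (∀ k, S k ∈ 𝕊 k) →
      (∀ k, 0 ≤ pii S k) ∧ (∑ k, pii S k = 1) ∧
      (∀ j, ∑ k, pii S k * (S k).2 j = pii S j))
    (xhat : Fin m → ℝ) (yhat : ℝ) (hx0 : xhat ⟨0, hm⟩ = 0)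
    (hhx : Finset.univ.inf' (Finset.univ_nonempty_iff.mpr ⟨⟨0, hm⟩⟩)
      (fun k => (𝕊 k).inf' (hne k) (fval m k xhat)) = yhat)
    (hmax : ∀ x : Fin m → ℝ, x ⟨0, hm⟩ = 0 →
      Finset.univ.inf' (Finset.univ_nonempty_iff.mpr ⟨⟨0, hm⟩⟩)
        (fun k => (𝕊 k).inf' (hne k) (fval m k x)) ≤ yhat)
    (P : Finset (Fin m)) (hP0 : (⟨0, hm⟩ : Fin m) ∈ P)
    (SkP : Fin m → ℝ × (Fin m → ℝ))
    (hSkP : ∀ k, SkP k ∈ 𝕊 k ∧ ∀ j ∉ P, (SkP k).2 j = 0)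
    (hminP : ∀ k, ∀ T ∈ 𝕊 k, (∀ j ∉ P, T.2 j = 0) →
      fval m k xhat (SkP k) ≤ fval m k xhat T)
    (hval : ∀ k ∈ P, fval m k xhat (SkP k) = yhat) :
    (∑ k, (SkP k).1 * pii SkP k = yhat) ∧
    (∀ S : Fin m → ℝ × (Fin m → ℝ), (∀ k, S k ∈ 𝕊 k) →
      ∑ k, (SkP k).1 * pii SkP k ≤ ∑ k, (S k).1 * pii S k) := by
  -- key identity: cost(S) = ∑ π_k f_k(xhat, S k)
  have key : ∀ S : Fin m → ℝ × (Fin m → ℝ), (∀ k, S k ∈ 𝕊 k) →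
      ∑ k, (S k).1 * pii S k = ∑ k, pii S k * fval m k xhat (S k) := by
    intro S hS
    obtain ⟨hpos, hsum1, hstat⟩ := hpii S hS
    have hmid : ∑ k, pii S k * (∑ j, (S k).2 j * xhat j) = ∑ k, pii S k * xhat k := by
      calc ∑ k, pii S k * (∑ j, (S k).2 j * xhat j)
          = ∑ k, ∑ j, pii S k * (S k).2 j * xhat j := by
            refine Finset.sum_congr rfl fun k _ => ?_
            rw [Finset.mul_sum]; exact Finset.sum_congr rfl fun j _ => by ring
        _ = ∑ j, (∑ k, pii S k * (S k).2 j) * xhat j := by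
            rw [Finset.sum_comm]
            exact Finset.sum_congr rfl fun j _ => (Finset.sum_mul _ _ _).symm
        _ = ∑ j, pii S j * xhat j := by
            exact Finset.sum_congr rfl fun j _ => by rw [hstat j]
    simp only [fval]
    have : ∑ k, pii S k * ((S k).1 + (∑ j, (S k).2 j * xhat j) - xhat k)
        = ∑ k, ((S k).1 * pii S k + pii S k * (∑ j, (S k).2 j * xhat j)
            - pii S k * xhat k) := by
      exact Finset.sum_congr rfl fun k _ => by ring
    rw [this, Finset.sum_sub_distrib, Finset.sum_add_distrib, hmid]
    ring
  obtain ⟨hpos, hsum1, hstat⟩ := hpii SkP (fun k => (hSkP k).1)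
  -- π vanishes outside P
  have hvan : ∀ j ∉ P, pii SkP j = 0 := by
    intro j hj
    rw [← hstat j]
    refine Finset.sum_eq_zero fun k _ => ?_
    rw [(hSkP k).2 j hj, mul_zero]
  have hcost : ∑ k, (SkP k).1 * pii SkP k = yhat := by
    rw [key SkP (fun k => (hSkP k).1)]
    have h1 : ∑ k, pii SkP k * fval m k xhat (SkP k)
        = ∑ k ∈ P, pii SkP k * fval m k xhat (SkP k) := by
      refine (Finset.sum_subset P.subset_univ fun k _ hk => ?_).symm
      rw [hvan k hk, zero_mul]
    have h2 : ∑ k ∈ P, pii SkP k = 1 := by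
      rw [← hsum1]
      exact Finset.sum_subset P.subset_univ fun k _ hk => hvan k hk
    rw [h1]
    calc ∑ k ∈ P, pii SkP k * fval m k xhat (SkP k)
        = ∑ k ∈ P, pii SkP k * yhat :=
          Finset.sum_congr rfl fun k hk => by rw [hval k hk]
      _ = (∑ k ∈ P, pii SkP k) * yhat := (Finset.sum_mul _ _ _).symm
      _ = yhat := by rw [h2, one_mul]
  refine ⟨hcost, fun S hS => ?_⟩
  obtain ⟨hpos', hsum1', hstat'⟩ := hpii S hS
  have hlb : ∀ k, yhat ≤ fval m k xhat (S k) := by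
    intro k
    rw [← hhx]
    calc Finset.univ.inf' _ (fun k => (𝕊 k).inf' (hne k) (fval m k xhat))
        ≤ (𝕊 k).inf' (hne k) (fval m k xhat) :=
          Finset.inf'_le _ (Finset.mem_univ k)
      _ ≤ fval m k xhat (S k) := Finset.inf'_le _ (hS k)
  rw [hcost, key S hS]
  calc yhat = ∑ k, pii S k * yhat := by
        rw [← Finset.sum_mul, hsum1', one_mul]
    _ ≤ ∑ k, pii S k * fval m k xhat (S k) :=
        Finset.sum_le_sum fun k _ =>
          mul_le_mul_of_nonneg_left (hlb k) (hpos' k)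
end

section
/- Let (x̂, ŷ) be a highest point of the Markov chain polytope, S* a minimum-cost Markov chain with recurrent index set P* = {k : π_k(S*) > 0}, and P ⊇ P* with 0 ∈ P. Then {0} ⊆ P* ⊆ {k ∈ P : g_{k|P}(x̂) = ŷ}. -/
/-- Pruning lemma, part (b).  Let `(xhat, yhat)` be a highest point of the
Markov chain polytope, `Sstar` a minimum-cost chain with recurrent set
`P* = {k : pii Sstar k > 0}` and `P ⊇ P*` with `0 ∈ P`.  Then `0 ∈ P*` and
`P* ⊆ {k ∈ P : g_{k|P}(xhat) = yhat}` (the latter equality being expressed as: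
`yhat` is attained by some `P`-restricted state and lower-bounds all of them). -/
theorem stmt11 (m : ℕ) (hm : 0 < m)
    (𝕊 : Fin m → Finset (ℝ × (Fin m → ℝ)))
    (hne : ∀ k, (𝕊 k).Nonempty)
    (hnn : ∀ k, ∀ T ∈ 𝕊 k, ∀ j, 0 ≤ T.2 j)
    (hsum : ∀ k, ∀ T ∈ 𝕊 k, ∑ j, T.2 j = 1)
    (hq0 : ∀ k, ∀ T ∈ 𝕊 k, 0 < T.2 ⟨0, hm⟩)
    (pii : (Fin m → ℝ × (Fin m → ℝ)) → Fin m → ℝ)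
    (hpii : ∀ S : Fin m → ℝ × (Fin m → ℝ), (∀ k, S k ∈ 𝕊 k) →
      (∀ k, 0 ≤ pii S k) ∧ (∑ k, pii S k = 1) ∧
      (∀ j, ∑ k, pii S k * (S k).2 j = pii S j))
    (xhat : Fin m → ℝ) (yhat : ℝ) (hx0 : xhat ⟨0, hm⟩ = 0)
    (hhx : Finset.univ.inf' (Finset.univ_nonempty_iff.mpr ⟨⟨0, hm⟩⟩)
      (fun k => (𝕊 k).inf' (hne k) (fval m k xhat)) = yhat)
    (hmax : ∀ x : Fin m → ℝ, x ⟨0, hm⟩ = 0 →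
      Finset.univ.inf' (Finset.univ_nonempty_iff.mpr ⟨⟨0, hm⟩⟩)
        (fun k => (𝕊 k).inf' (hne k) (fval m k x)) ≤ yhat)
    (Sstar : Fin m → ℝ × (Fin m → ℝ)) (hSstar : ∀ k, Sstar k ∈ 𝕊 k)
    (hSmin : ∀ S : Fin m → ℝ × (Fin m → ℝ), (∀ k, S k ∈ 𝕊 k) →
      ∑ k, (Sstar k).1 * pii Sstar k ≤ ∑ k, (S k).1 * pii S k)
    (hcost : ∑ k, (Sstar k).1 * pii Sstar k = yhat)
    (P : Finset (Fin m)) (hP0 : (⟨0, hm⟩ : Fin m) ∈ P)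
    (hPstar : ∀ k, 0 < pii Sstar k → k ∈ P) :
    0 < pii Sstar ⟨0, hm⟩ ∧
    ∀ k, 0 < pii Sstar k →
      (k ∈ P ∧
       (∃ T ∈ 𝕊 k, (∀ j ∉ P, T.2 j = 0) ∧ fval m k xhat T = yhat) ∧
       (∀ T ∈ 𝕊 k, (∀ j ∉ P, T.2 j = 0) → yhat ≤ fval m k xhat T)) := by
  obtain ⟨h1, h2, h3⟩ := hpii Sstar hSstar
  -- yhat lower-bounds all fval
  have hA : ∀ k, ∀ T ∈ 𝕊 k, yhat ≤ fval m k xhat T := by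
    intro k T hT
    calc yhat
        = Finset.univ.inf' (Finset.univ_nonempty_iff.mpr ⟨⟨0, hm⟩⟩)
            (fun k => (𝕊 k).inf' (hne k) (fval m k xhat)) := hhx.symm
      _ ≤ (𝕊 k).inf' (hne k) (fval m k xhat) :=
          Finset.inf'_le _ (Finset.mem_univ k)
      _ ≤ fval m k xhat T := Finset.inf'_le _ hT
  -- some state has positive stationary probability
  have hex : ∃ k, 0 < pii Sstar k := by
    by_contra hcon
    push_neg at hcon
    have : ∑ k, pii Sstar k ≤ 0 := Finset.sum_nonpos fun k _ => hcon k
    linarith [h2]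
  obtain ⟨k0, hk0⟩ := hex
  have hB : 0 < pii Sstar ⟨0, hm⟩ := by
    rw [← h3 ⟨0, hm⟩]
    exact Finset.sum_pos'
      (fun i _ => mul_nonneg (h1 i) (hnn i _ (hSstar i) _))
      ⟨k0, Finset.mem_univ k0, mul_pos hk0 (hq0 k0 _ (hSstar k0))⟩
  -- support condition
  have hC : ∀ k, 0 < pii Sstar k → ∀ j ∉ P, (Sstar k).2 j = 0 := by
    intro k hk j hj
    have hpj : pii Sstar j = 0 := by
      rcases lt_or_eq_of_le (h1 j) with h | h
      · exact absurd (hPstar j h) hj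
      · exact h.symm
    have hsum0 : ∑ i, pii Sstar i * (Sstar i).2 j = 0 := by rw [h3 j, hpj]
    have := (Finset.sum_eq_zero_iff_of_nonneg
      (fun i _ => mul_nonneg (h1 i) (hnn i _ (hSstar i) j))).mp hsum0 k
      (Finset.mem_univ k)
    rcases mul_eq_zero.mp this with h' | h'
    · exact absurd h' (ne_of_gt hk)
    · exact h'
  -- weighted sum of fvals equals yhat
  have hswap :
      ∑ k, (∑ j, (Sstar k).2 j * xhat j) * pii Sstar k
        = ∑ j, pii Sstar j * xhat j := by
    have e1 : ∀ k : Fin m, (∑ j, (Sstar k).2 j * xhat j) * pii Sstar k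
        = ∑ j, pii Sstar k * (Sstar k).2 j * xhat j := by
      intro k; rw [Finset.sum_mul]
      exact Finset.sum_congr rfl fun j _ => by ring
    simp_rw [e1]
    rw [Finset.sum_comm]
    exact Finset.sum_congr rfl fun j _ => by rw [← Finset.sum_mul, h3 j]
  have hD : ∑ k, fval m k xhat (Sstar k) * pii Sstar k = yhat := by
    have expand : ∀ k : Fin m, fval m k xhat (Sstar k) * pii Sstar k
        = (Sstar k).1 * pii Sstar k
          + (∑ j, (Sstar k).2 j * xhat j) * pii Sstar k
          - xhat k * pii Sstar k := by
      intro k; unfold fval; ring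
    simp_rw [expand]
    rw [Finset.sum_sub_distrib, Finset.sum_add_distrib, hswap, hcost]
    have : ∑ j, pii Sstar j * xhat j = ∑ k, xhat k * pii Sstar k :=
      Finset.sum_congr rfl fun k _ => mul_comm _ _
    rw [this, add_sub_cancel_right]
  -- recurrent states attain yhat
  have hE : ∀ k, 0 < pii Sstar k → fval m k xhat (Sstar k) = yhat := by
    intro k hk
    by_contra hne'
    have hlt : yhat < fval m k xhat (Sstar k) :=
      lt_of_le_of_ne (hA k _ (hSstar k)) (Ne.symm hne')
    have hlt2 : ∑ i : Fin m, yhat * pii Sstar i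
        < ∑ i, fval m i xhat (Sstar i) * pii Sstar i :=
      Finset.sum_lt_sum
        (fun i _ => mul_le_mul_of_nonneg_right (hA i _ (hSstar i)) (h1 i))
        ⟨k, Finset.mem_univ k, mul_lt_mul_of_pos_right hlt hk⟩
    rw [← Finset.mul_sum, h2, mul_one, hD] at hlt2
    exact lt_irrefl _ hlt2
  exact ⟨hB, fun k hk =>
    ⟨hPstar k hk, ⟨Sstar k, hSstar k, hC k hk, hE k hk⟩,
     fun T hT _ => hA k T hT⟩⟩
end

section
/- Any binary AIFV-m code tree T_k on n source symbols satisfying the structural restrictions (at most one slave-1 node, slave-0 nodes only below master nodes, etc.) has height at most (n−1)(m+1)+1. Specifically, with ℓ ≥ 1 leaves, T_k has n−ℓ non-leaf master nodes, at most ℓ−1 complete nodes, at most one slave-1 node, and at most (n−ℓ)·m slave-0 nodes, giving at most n + (n−1)m non-leaf nodes total. -/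
/-- The kinds of nodes in a binary AIFV-`m` code tree: complete nodes,
slave-0 and slave-1 nodes, and master nodes of degree `d < m`. -/
inductive NodeKind (m : ℕ) where
  | complete : NodeKind m
  | slave0 : NodeKind m
  | slave1 : NodeKind m
  | master : Fin m → NodeKind m
  deriving DecidableEq

/-- Height bound for binary AIFV-`m` code trees satisfying the structural
restrictions.  The tree is modelled as a prefix-closed finite set `V` of binary
codewords, each node having a kind:  leaves are exactly the degree-0 masters,
there are `n` master nodes (one per source symbol), at most one slave-1 node,
each slave-0 node is one of the at most `m` consecutive slave-0 descendants of
a non-leaf master, and every complete node has a leaf in each of its two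
subtrees.  Then every node has depth at most `(n-1)(m+1)+1`. -/
theorem stmt18 (m n : ℕ) (hm : 0 < m) (hn : 0 < n)
    (V : Finset (List Bool)) (hroot : ([] : List Bool) ∈ V)
    (hpre : ∀ v ∈ V, ∀ u : List Bool, u <+: v → u ∈ V)
    (kind : List Bool → NodeKind m)
    (hleaf : ∀ v ∈ V,
      ((v ++ [false] ∉ V) ∧ (v ++ [true] ∉ V)) ↔ kind v = NodeKind.master ⟨0, hm⟩)
    (hmasters : {v : List Bool | v ∈ V ∧ ∃ d, kind v = NodeKind.master d}.ncard = n)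
    (hslave1 : {v : List Bool | v ∈ V ∧ kind v = NodeKind.slave1}.ncard ≤ 1)
    (hslave0 : ∀ w ∈ V, kind w = NodeKind.slave0 →
      ∃ v ∈ V, ∃ d : Fin m, kind v = NodeKind.master d ∧ d ≠ ⟨0, hm⟩ ∧
        ∃ t, 1 ≤ t ∧ t ≤ m ∧ w = v ++ List.replicate t false)
    (hcomplete : ∀ v ∈ V, kind v = NodeKind.complete →
      (∃ l ∈ V, (l ++ [false] ∉ V ∧ l ++ [true] ∉ V) ∧ (v ++ [false]) <+: l) ∧
      (∃ l ∈ V, (l ++ [false] ∉ V ∧ l ++ [true] ∉ V) ∧ (v ++ [true]) <+: l)) :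
    ∀ v ∈ V, v.length ≤ (n - 1) * (m + 1) + 1 := by
  classical
  set L : Finset (List Bool) := V.filter (fun v => kind v = NodeKind.master ⟨0, hm⟩) with hLdef
  set NL : Finset (List Bool) :=
    V.filter (fun v => ¬ kind v = NodeKind.master ⟨0, hm⟩) with hNLdef
  set C : Finset (List Bool) := V.filter (fun v => kind v = NodeKind.complete) with hCdef
  set S0 : Finset (List Bool) := V.filter (fun v => kind v = NodeKind.slave0) with hS0def
  set S1 : Finset (List Bool) := V.filter (fun v => kind v = NodeKind.slave1) with hS1def
  set M : Finset (List Bool) :=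
    V.filter (fun v => ∃ d, kind v = NodeKind.master d) with hMdef
  set Mp : Finset (List Bool) := M \ L with hMpdef
  -- number of masters is n
  have hMcard : M.card = n := by
    have hset : {v : List Bool | v ∈ V ∧ ∃ d, kind v = NodeKind.master d} = ↑M := by
      ext v; simp [hMdef]
    rwa [hset, Set.ncard_coe_finset] at hmasters
  -- number of slave-1 nodes is at most 1
  have hS1card : S1.card ≤ 1 := by
    have hset : {v : List Bool | v ∈ V ∧ kind v = NodeKind.slave1} = ↑S1 := by
      ext v; simp [hS1def]
    rwa [hset, Set.ncard_coe_finset] at hslave1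
  have hLM : L ⊆ M := by
    intro v hv
    rw [Finset.mem_filter] at hv ⊢
    exact ⟨hv.1, ⟨_, hv.2⟩⟩
  have hLn : L.card ≤ n := hMcard ▸ Finset.card_le_card hLM
  -- there is at least one leaf
  have hL1 : 1 ≤ L.card := by
    obtain ⟨b, hb, hmax⟩ := V.exists_max_image (fun v => v.length) ⟨[], hroot⟩
    have hleafb : kind b = NodeKind.master ⟨0, hm⟩ := by
      refine (hleaf b hb).1 ⟨fun h => ?_, fun h => ?_⟩
      · have := hmax _ h; simp at this
      · have := hmax _ h; simp at this
    exact Finset.card_pos.mpr ⟨b, Finset.mem_filter.mpr ⟨hb, hleafb⟩⟩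
  have hMpcard : Mp.card = n - L.card := by
    rw [hMpdef, Finset.card_sdiff_of_subset hLM, hMcard]
  -- leaves and non-leaves partition V
  have hVcard : V.card = L.card + NL.card :=
    (Finset.card_filter_add_card_filter_not
      (p := fun v => kind v = NodeKind.master ⟨0, hm⟩)).symm
  -- bound the number of slave-0 nodes
  have hS0ex : ∀ w ∈ S0, ∃ p : List Bool × ℕ,
      p ∈ Mp ×ˢ Finset.range m ∧ w = p.1 ++ List.replicate (p.2 + 1) false := by
    intro w hw
    rw [Finset.mem_filter] at hw
    obtain ⟨v, hvV, d, hkd, hd0, t, ht1, htm, hwe⟩ := hslave0 w hw.1 hw.2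
    refine ⟨(v, t - 1), ?_, ?_⟩
    · rw [Finset.mem_product, Finset.mem_range]
      refine ⟨Finset.mem_sdiff.mpr ⟨Finset.mem_filter.mpr ⟨hvV, ⟨d, hkd⟩⟩, fun hvL => ?_⟩,
        by omega⟩
      rw [Finset.mem_filter] at hvL
      rw [hkd] at hvL
      exact hd0 (by injection hvL.2)
    · have : t - 1 + 1 = t := by omega
      rw [this]; exact hwe
  have hS0card : S0.card ≤ Mp.card * m := by
    choose! g hg1 hg2 using hS0ex
    have h := Finset.card_le_card_of_injOn g (fun w hw => hg1 w hw) ?_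
    · rwa [Finset.card_product, Finset.card_range] at h
    · intro a ha b hb hab
      rw [hg2 a ha, hg2 b hb, hab]
  -- every non-leaf node is complete, slave0, slave1, or a nonzero-degree master
  have hNLsplit : NL.card ≤ C.card + S0.card + S1.card + Mp.card := by
    have hsub : NL ⊆ C ∪ S0 ∪ S1 ∪ Mp := by
      intro v hv
      rw [Finset.mem_filter] at hv
      simp only [hCdef, hS0def, hS1def, hMpdef, hMdef, hLdef, Finset.mem_union,
        Finset.mem_sdiff, Finset.mem_filter]
      cases hk : kind v with
      | complete => exact Or.inl (Or.inl (Or.inl ⟨hv.1, rfl⟩))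
      | slave0 => exact Or.inl (Or.inl (Or.inr ⟨hv.1, rfl⟩))
      | slave1 => exact Or.inl (Or.inr ⟨hv.1, rfl⟩)
      | master d =>
        exact Or.inr ⟨⟨hv.1, ⟨d, rfl⟩⟩, fun h => hv.2 (hk.trans h.2)⟩
    have h1 := Finset.card_le_card hsub
    have h2 := Finset.card_union_le (C ∪ S0 ∪ S1) Mp
    have h3 := Finset.card_union_le (C ∪ S0) S1
    have h4 := Finset.card_union_le C S0
    omega
  -- edge counting: complete nodes number at most (number of leaves) - 1
  have hfiber : (V.erase []).card
      = ∑ v ∈ V, ((V.erase []).filter (fun w => w.dropLast = v)).card := by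
    apply Finset.card_eq_sum_card_fiberwise
    intro w hw
    exact hpre w (Finset.mem_of_mem_erase hw) _ (List.dropLast_prefix w)
  have hfib1 : ∀ v ∈ NL,
      1 ≤ ((V.erase []).filter (fun w => w.dropLast = v)).card := by
    intro v hv
    rw [Finset.mem_filter] at hv
    have hnb : ¬ (v ++ [false] ∉ V ∧ v ++ [true] ∉ V) :=
      fun h => hv.2 ((hleaf v hv.1).1 h)
    have hb : ∃ b, v ++ [b] ∈ V := by
      by_contra h
      push_neg at h
      exact hnb ⟨h false, h true⟩
    obtain ⟨b, hb⟩ := hb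
    refine Finset.card_pos.mpr ⟨v ++ [b], Finset.mem_filter.mpr
      ⟨Finset.mem_erase.mpr ⟨by simp, hb⟩, by simp⟩⟩
  have hfib2 : ∀ v ∈ C,
      2 ≤ ((V.erase []).filter (fun w => w.dropLast = v)).card := by
    intro v hv
    rw [Finset.mem_filter] at hv
    obtain ⟨⟨l0, hl0V, _, hp0⟩, ⟨l1, hl1V, _, hp1⟩⟩ := hcomplete v hv.1 hv.2
    have h0 : v ++ [false] ∈ V := hpre l0 hl0V _ hp0
    have h1 : v ++ [true] ∈ V := hpre l1 hl1V _ hp1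
    have hsub : ({v ++ [false], v ++ [true]} : Finset (List Bool))
        ⊆ (V.erase []).filter (fun w => w.dropLast = v) := by
      intro w hw
      simp only [Finset.mem_insert, Finset.mem_singleton] at hw
      rcases hw with rfl | rfl <;>
        exact Finset.mem_filter.mpr ⟨Finset.mem_erase.mpr ⟨by simp, by assumption⟩, by simp⟩
    calc 2 = ({v ++ [false], v ++ [true]} : Finset (List Bool)).card :=
          (Finset.card_pair (by simp)).symm
      _ ≤ _ := Finset.card_le_card hsub
  have hCNL : C ⊆ NL := by
    intro v hv
    rw [Finset.mem_filter] at hv ⊢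
    exact ⟨hv.1, by rw [hv.2]; simp⟩
  have hedge : NL.card + C.card ≤ V.card - 1 := by
    have hVe : (V.erase []).card = V.card - 1 := Finset.card_erase_of_mem hroot
    have hs1 : ∑ v ∈ NL, ((V.erase []).filter (fun w => w.dropLast = v)).card
        ≤ ∑ v ∈ V, ((V.erase []).filter (fun w => w.dropLast = v)).card :=
      Finset.sum_le_sum_of_subset (Finset.filter_subset _ _)
    have hs2 : ∑ v ∈ NL \ C, ((V.erase []).filter (fun w => w.dropLast = v)).card
        + ∑ v ∈ C, ((V.erase []).filter (fun w => w.dropLast = v)).card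
        = ∑ v ∈ NL, ((V.erase []).filter (fun w => w.dropLast = v)).card :=
      Finset.sum_sdiff hCNL
    have hs3 : C.card * 2 ≤ ∑ v ∈ C,
        ((V.erase []).filter (fun w => w.dropLast = v)).card := by
      have := Finset.card_nsmul_le_sum C _ 2 hfib2
      simpa [smul_eq_mul] using this
    have hs4 : (NL \ C).card * 1 ≤ ∑ v ∈ NL \ C,
        ((V.erase []).filter (fun w => w.dropLast = v)).card := by
      have := Finset.card_nsmul_le_sum (NL \ C) _ 1
        (fun v hv => hfib1 v (Finset.sdiff_subset hv))
      simpa [smul_eq_mul] using this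
    have hs5 : (NL \ C).card = NL.card - C.card := Finset.card_sdiff_of_subset hCNL
    have hs6 : C.card ≤ NL.card := Finset.card_le_card hCNL
    omega
  have hCcard : C.card ≤ L.card - 1 := by
    have hVpos : 1 ≤ V.card := Finset.card_pos.mpr ⟨[], hroot⟩
    omega
  -- depth of any node is at most the number of non-leaf nodes
  intro v hv
  have hlen : v.length ≤ NL.card := by
    have hsub : (Finset.range v.length).image (fun i => v.take i) ⊆ NL := by
      intro u hu
      obtain ⟨i, hi, rfl⟩ := Finset.mem_image.mp hu
      rw [Finset.mem_range] at hi
      have huV : v.take i ∈ V := hpre v hv _ (List.take_prefix i v)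
      refine Finset.mem_filter.mpr ⟨huV, fun hk => ?_⟩
      have hnotc := (hleaf _ huV).2 hk
      have hchild : v.take (i + 1) ∈ V := hpre v hv _ (List.take_prefix _ v)
      have hts : v.take (i + 1) = v.take i ++ [v[i]] := by
        rw [List.take_succ, List.getElem?_eq_getElem hi]
        rfl
      rw [hts] at hchild
      cases hb : v[i] with
      | false => rw [hb] at hchild; exact hnotc.1 hchild
      | true => rw [hb] at hchild; exact hnotc.2 hchild
    have hcard : ((Finset.range v.length).image (fun i => v.take i)).card = v.length := by
      rw [Finset.card_image_of_injOn, Finset.card_range]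
      intro i hi j hj hij
      simp only [Finset.coe_range, Set.mem_Iio] at hi hj
      have := congrArg List.length hij
      rwa [List.length_take, List.length_take, Nat.min_eq_left hi.le,
        Nat.min_eq_left hj.le] at this
    calc v.length = _ := hcard.symm
      _ ≤ NL.card := Finset.card_le_card hsub
  -- putting everything together
  have hS0' : S0.card ≤ (n - L.card) * m := by rwa [hMpcard] at hS0card
  have hmul : (n - L.card) * m ≤ (n - 1) * m :=
    Nat.mul_le_mul_right m (by omega)
  have hq : (n - 1) * (m + 1) = (n - 1) * m + (n - 1) := by ring
  set A := (n - L.card) * m with hA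
  set B := (n - 1) * m with hB
  omega
end
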